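/- With B₂⁽⁰⁾ and B₂⁽¹⁾ as above and H_k := (q;q)_k S_k (where (q;q)_k = ∏_{i=1}^k (1−q^i)), one has (B₂⁽⁰⁾ + B₂⁽¹⁾)^m H_ε = H_{2m+ε} for all m ≥ 0 and ε ∈ {0,1}. -/
import Mathlib


/- The field ℚ(q) of rational functions. -/
noncomputable abbrev K : Type := RatFunc ℚ
noncomputable def q : K := RatFunc.X

/- The free ℚ(q)-module with basis indexed by pairs (m, n);
   `S m n` is the basis vector for a two-part partition m ≥ n, and 0 otherwise. -/
noncomputable abbrev V : Type := (ℕ × ℕ) →₀ K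

noncomputable def S (m n : ℕ) : V := if n ≤ m then Finsupp.single (m, n) 1 else 0

/-- The Pieri product `S_a · S_b = ∑_{ℓ=0}^{b} S_{a+b-ℓ, ℓ}` (for a ≥ b). -/
noncomputable def P (a b : ℕ) : V := ∑ ℓ ∈ Finset.range (b + 1), S (a + b - ℓ) ℓ

/-- `B₂⁽⁰⁾` on the basis: `-q^{m+1}(1-q^{n+1}) S_{m+1}·S_{n+1} + q^n(1-q^{m+2}) S_{m+2}·S_n`. -/
noncomputable def B0 : V →ₗ[K] V :=
  Finsupp.lift V K (ℕ × ℕ) fun p =>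
    (-q ^ (p.1 + 1) * (1 - q ^ (p.2 + 1))) • P (p.1 + 1) (p.2 + 1)
      + (q ^ p.2 * (1 - q ^ (p.1 + 2))) • P (p.1 + 2) p.2

/-- `B₂⁽¹⁾` on the basis:
`q^{m+n+1}[(1-q^{n+1}) S_{m+1}·S_{n+1} - (1-q^{m+2}) S_{m+2}·S_n]`. -/
noncomputable def B1 : V →ₗ[K] V :=
  Finsupp.lift V K (ℕ × ℕ) fun p =>
    q ^ (p.1 + p.2 + 1) •
      ((1 - q ^ (p.2 + 1)) • P (p.1 + 1) (p.2 + 1)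
        - (1 - q ^ (p.1 + 2)) • P (p.1 + 2) p.2)

/-- The q-shifted factorial `(q;q)_k = ∏_{i=1}^k (1 - q^i)`. -/
noncomputable def qPoch (k : ℕ) : K := ∏ i ∈ Finset.range k, (1 - q ^ (i + 1))

/-- The Hall-Littlewood element `H_k = (q;q)_k S_k`. -/
noncomputable def H (k : ℕ) : V := qPoch k • S k 0

lemma step (k : ℕ) : (B0 + B1) (S k 0) = ((1 - q ^ (k + 1)) * (1 - q ^ (k + 2))) • S (k + 2) 0 := by
  have hP : P (k + 2) 0 = S (k + 2) 0 := by simp [P]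
  have hS : S k 0 = Finsupp.single (k, 0) 1 := by simp [S]
  rw [hS]
  simp only [LinearMap.add_apply, B0, B1, Finsupp.lift_apply, Finsupp.sum_single_index,
    zero_smul, one_smul, hP]
  generalize P (k + 1) (0 + 1) = v
  generalize S (k + 2) 0 = w
  ext x
  simp only [Finsupp.coe_add, Finsupp.coe_smul, Finsupp.coe_sub, Pi.add_apply, Pi.smul_apply,
    Pi.sub_apply, smul_eq_mul]
  ring

lemma stepH (k : ℕ) : (B0 + B1) (H k) = H (k + 2) := by
  have : qPoch (k + 2) = qPoch k * ((1 - q ^ (k + 1)) * (1 - q ^ (k + 2))) := by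
    simp [qPoch, Finset.prod_range_succ]; ring
  rw [H, map_smul, step, H, this, smul_smul]

/-- `(B₂⁽⁰⁾ + B₂⁽¹⁾)^m H_ε = H_{2m+ε}` for ε ∈ {0,1}. -/
theorem B0_add_B1_pow_H (m ε : ℕ) (hε : ε ≤ 1) :
    ((B0 + B1) ^ m : Module.End K V) (H ε) = H (2 * m + ε) := by
  induction m with
  | zero => simp
  | succ n ih =>
    rw [pow_succ', Module.End.mul_apply, ih]
    have := stepH (2 * n + ε)
    rw [this]
    congr 1
    omega
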